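/- arXiv:2501.04218 — 7 statements merged into one kernel-verified Lean document; each statement's English description precedes it below -/
import Mathlib

section
/- For the NTS characteristic exponent ψ⁰(ξ) = δ[(α² - (β + iξ)²)^{ν/2} - (α² - β²)^{ν/2}] with ν ∈ (0,2), δ > 0, |β| < α, for every φ ∈ (-π/2, π/2), ψ⁰(ρe^{iφ}) = δ e^{iφν} ρ^ν + O(ρ^{ν-1}) + O(1) as ρ → +∞. -/
/-!
With `ξ = ρ e^{iφ}` one has `α² - (β + iξ)² = ρ² B(1/ρ)` for the polynomial
`B(t) = e^{2iφ} - 2iβ e^{iφ} t + (α² - β²) t²`. Since `ρ² > 0`, the principal power splits as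
`(ρ² B(1/ρ))^{ν/2} = ρ^ν B(1/ρ)^{ν/2}`. As `|2φ| < π`, `B(0) = e^{2iφ}` lies in the slit plane,
so `B(0)^{ν/2} = e^{iφν}` and `t ↦ B(t)^{ν/2}` is differentiable at `0`; hence
`B(1/ρ)^{ν/2} = e^{iφν} + O(1/ρ)`, and multiplying by `ρ^ν` gives the claim.
-/

open Complex Real Filter Asymptotics Topology

namespace Complex

theorem ofReal_mul_cpow {a : ℝ} (ha : 0 ≤ a) (z s : ℂ) :
    ((a : ℂ) * z) ^ s = (a : ℂ) ^ s * z ^ s := by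
  rcases eq_or_ne s 0 with rfl | hs
  · simp
  rcases ha.eq_or_lt with rfl | ha
  · simp [zero_cpow hs]
  rcases eq_or_ne z 0 with rfl | hz
  · simp [zero_cpow hs]
  rw [cpow_def_of_ne_zero (mul_ne_zero (ofReal_ne_zero.mpr ha.ne') hz), log_ofReal_mul ha hz,
    ofReal_log ha.le, add_mul, exp_add, ← cpow_def_of_ne_zero (ofReal_ne_zero.mpr ha.ne'),
    ← cpow_def_of_ne_zero hz]

theorem exp_cpow {x : ℂ} (hx₁ : -π < x.im) (hx₂ : x.im ≤ π) (s : ℂ) :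
    exp x ^ s = exp (x * s) := by
  rw [cpow_def_of_ne_zero (exp_ne_zero x), log_exp hx₁ hx₂]

theorem exp_mem_slitPlane_of_abs_im_lt {x : ℂ} (hx : |x.im| < π) : exp x ∈ slitPlane := by
  obtain ⟨h₁, h₂⟩ := abs_lt.mp hx
  rw [mem_slitPlane_iff_arg, ← log_im, log_exp h₁ h₂.le]
  exact ⟨h₂.ne, exp_ne_zero x⟩

theorem ofReal_sq_cpow_div_two {ρ : ℝ} (hρ : 0 ≤ ρ) (ν : ℝ) :
    ((ρ ^ 2 : ℝ) : ℂ) ^ ((ν : ℂ) / 2) = (ρ : ℂ) ^ (ν : ℂ) := by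
  rw [show (ν : ℂ) / 2 = ((ν / 2 : ℝ) : ℂ) by push_cast; ring, ← ofReal_cpow (by positivity),
    ← ofReal_cpow hρ, ← Real.rpow_natCast_mul hρ]
  norm_num [mul_div_cancel₀]

end Complex

theorem DifferentiableAt.isBigO_cpow_comp_inv_sub {F : ℂ → ℂ} (hF : DifferentiableAt ℂ F 0)
    (hF0 : F 0 ∈ slitPlane) (s : ℂ) :
    (fun ρ : ℝ => F (ρ⁻¹ : ℝ) ^ s - F 0 ^ s) =O[atTop] (fun ρ : ℝ => ρ⁻¹) := by
  have hinv : Tendsto (fun ρ : ℝ => ((ρ⁻¹ : ℝ) : ℂ)) atTop (𝓝 0) := by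
    rw [← ofReal_zero]
    exact (continuous_ofReal.tendsto 0).comp tendsto_inv_atTop_zero
  refine ((hF.cpow_const hF0).isBigO_sub.comp_tendsto hinv).trans (isBigO_of_le _ fun ρ => ?_)
  simp

theorem isBigO_ofReal_cpow_mul {h : ℝ → ℂ} (ν : ℝ) (hh : h =O[atTop] (fun ρ : ℝ => ρ⁻¹)) :
    (fun ρ : ℝ => (ρ : ℂ) ^ (ν : ℂ) * h ρ) =O[atTop] (fun ρ : ℝ => ρ ^ (ν - 1)) := by
  have hpow : (fun ρ : ℝ => (ρ : ℂ) ^ (ν : ℂ)) =O[atTop] (fun ρ : ℝ => ρ ^ ν) := by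
    refine IsBigO.of_bound 1 ?_
    filter_upwards [eventually_gt_atTop 0] with ρ hρ
    rw [norm_cpow_eq_rpow_re_of_pos hρ, ofReal_re, one_mul, Real.norm_of_nonneg (by positivity)]
  refine (hpow.mul hh).congr' .rfl ?_
  filter_upwards [eventually_gt_atTop 0] with ρ hρ
  rw [Real.rpow_sub_one hρ.ne', div_eq_mul_inv]

theorem sq_sub_sq_add_I_mul_exp_eq (α β φ : ℝ) {ρ : ℝ} (hρ : ρ ≠ 0) :
    (α : ℂ) ^ 2 - ((β : ℂ) + I * (ρ * exp (I * φ))) ^ 2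
      = ((ρ ^ 2 : ℝ) : ℂ) * (exp (2 * φ * I) - 2 * I * β * exp (I * φ) * (ρ⁻¹ : ℝ)
          + (α ^ 2 - β ^ 2) * (ρ⁻¹ : ℝ) ^ 2) := by
  have hsq : exp (2 * φ * I) = exp (I * φ) ^ 2 := by
    rw [← Complex.exp_nat_mul]
    ring_nf
  have hρ' : (ρ : ℂ) ≠ 0 := ofReal_ne_zero.mpr hρ
  rw [hsq]
  push_cast
  field_simp
  linear_combination (-(ρ ^ 2 * exp (I * φ) ^ 2)) * I_sq

theorem stmt_2_general (ν δ α β : ℝ)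
    (ψ : ℂ → ℂ)
    (hψ : ∀ ξ : ℂ, ψ ξ =
      (δ : ℂ) * (((α : ℂ) ^ 2 - ((β : ℂ) + Complex.I * ξ) ^ 2) ^ ((ν : ℂ) / 2)
        - ((α : ℂ) ^ 2 - (β : ℂ) ^ 2) ^ ((ν : ℂ) / 2)))
    (φ : ℝ) (hφ : φ ∈ Set.Ioo (-(π / 2)) (π / 2)) :
    ∃ f g : ℝ → ℂ,
      (∀ᶠ ρ : ℝ in atTop,
        ψ ((ρ : ℂ) * Complex.exp (Complex.I * φ))
          = (δ : ℂ) * Complex.exp (Complex.I * φ * ν) * (ρ : ℂ) ^ (ν : ℂ) + f ρ + g ρ) ∧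
      f =O[atTop] (fun ρ : ℝ => ρ ^ (ν - 1)) ∧
      g =O[atTop] (fun _ : ℝ => (1 : ℝ)) := by
  set B : ℂ → ℂ := fun t =>
    exp (2 * φ * I) - 2 * I * β * exp (I * φ) * t + (α ^ 2 - β ^ 2) * t ^ 2
  have hB0 : B 0 = exp (2 * φ * I) := by simp [B]
  have him : |(2 * φ * I).im| < π := by
    simp only [mul_I_im, mul_re, ofReal_re, ofReal_im, re_ofNat, im_ofNat]
    rw [abs_lt]
    constructor <;> linarith [hφ.1, hφ.2]
  have hlead : B 0 ^ ((ν : ℂ) / 2) = exp (I * φ * ν) := by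
    rw [hB0, exp_cpow (abs_lt.mp him).1 (abs_lt.mp him).2.le]
    congr 1
    ring
  refine ⟨fun ρ => δ * ((ρ : ℂ) ^ (ν : ℂ) * (B (ρ⁻¹ : ℝ) ^ ((ν : ℂ) / 2) - B 0 ^ ((ν : ℂ) / 2))),
    fun _ => -(δ * ((α : ℂ) ^ 2 - (β : ℂ) ^ 2) ^ ((ν : ℂ) / 2)), ?_, ?_,
    isBigO_const_const _ one_ne_zero atTop⟩
  · filter_upwards [eventually_gt_atTop 0] with ρ hρ
    rw [hψ, sq_sub_sq_add_I_mul_exp_eq α β φ hρ.ne', ofReal_mul_cpow (by positivity),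
      ofReal_sq_cpow_div_two hρ.le, ← hlead]
    ring
  · exact (isBigO_ofReal_cpow_mul ν (DifferentiableAt.isBigO_cpow_comp_inv_sub (by fun_prop)
      (hB0 ▸ exp_mem_slitPlane_of_abs_im_lt him) _)).const_mul_left _

/-- NTS: for every `φ ∈ (-π/2, π/2)`,
`ψ⁰(ρ e^{iφ}) = δ e^{iφν} ρ^ν + O(ρ^{ν-1}) + O(1)` as `ρ → +∞`. -/
theorem stmt_2 (ν δ α β : ℝ) (hν : ν ∈ Set.Ioo (0 : ℝ) 2) (hδ : 0 < δ) (hβ : |β| < α)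
    (ψ : ℂ → ℂ)
    (hψ : ∀ ξ : ℂ, ψ ξ =
      (δ : ℂ) * (((α : ℂ) ^ 2 - ((β : ℂ) + Complex.I * ξ) ^ 2) ^ ((ν : ℂ) / 2)
        - ((α : ℂ) ^ 2 - (β : ℂ) ^ 2) ^ ((ν : ℂ) / 2)))
    (φ : ℝ) (hφ : φ ∈ Set.Ioo (-(π / 2)) (π / 2)) :
    ∃ f g : ℝ → ℂ,
      (∀ᶠ ρ : ℝ in atTop,
        ψ ((ρ : ℂ) * Complex.exp (Complex.I * φ))
          = (δ : ℂ) * Complex.exp (Complex.I * φ * ν) * (ρ : ℂ) ^ (ν : ℂ) + f ρ + g ρ) ∧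
      f =O[atTop] (fun ρ : ℝ => ρ ^ (ν - 1)) ∧
      g =O[atTop] (fun _ : ℝ => (1 : ℝ)) :=
  stmt_2_general ν δ α β ψ hψ φ hφ
end

section
/- The CGMY/KoBoL characteristic exponent ψ⁰(ξ) = cΓ(-ν)[(-λ₋)^ν - (-λ₋ - iξ)^ν + λ₊^ν - (λ₊ + iξ)^ν], with c > 0, ν ∈ (0,2)\{1}, λ₋ < 0 < λ₊, satisfies for every φ ∈ (-π/2, π/2): ψ⁰(ρe^{iφ}) ~ -2cΓ(-ν)cos(νπ/2)e^{iνφ} ρ^ν as ρ → +∞. -/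
/-!
With `ξ = ρ e^{iφ}` the two non-constant terms of `ψ⁰` are `(-λ₋ + ρ z₋)^ν` and `(λ₊ + ρ z₊)^ν`,
where `z∓ = ∓i e^{iφ} = e^{i(φ ∓ π/2)}` lies off the branch cut because `|φ| < π/2`. Since
`(a + ρ z)^ν = ρ^ν (a/ρ + z)^ν` and `w ↦ w^ν` is continuous on the slit plane, each term is
`ρ^ν z^ν (1 + o(1))`, while the constant terms are `o(ρ^ν)`. The leading coefficient is
`-cΓ(-ν)(z₋^ν + z₊^ν) = -2cΓ(-ν)cos(νπ/2) e^{iνφ}`, which is nonzero for `ν ∈ (0,2) \ {1}`.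
-/

open Complex Real Filter Topology Set

namespace Complex

lemma ofReal_mul_cpow_s3 {r : ℝ} (hr : 0 ≤ r) (w s : ℂ) : ((r : ℂ) * w) ^ s = (r : ℂ) ^ s * w ^ s := by
  rcases eq_or_ne s 0 with rfl | hs
  · simp
  rcases hr.eq_or_lt with rfl | hr
  · simp [zero_cpow hs]
  rcases eq_or_ne w 0 with rfl | hw
  · simp [zero_cpow hs]
  have hr' : (r : ℂ) ≠ 0 := ofReal_ne_zero.mpr hr.ne'
  rw [cpow_def_of_ne_zero (mul_ne_zero hr' hw), cpow_def_of_ne_zero hr', cpow_def_of_ne_zero hw,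
    log_ofReal_mul hr hw, ← ofReal_log hr.le, ← exp_add, add_mul]

lemma tendsto_inv_ofReal_cpow_atTop {s : ℂ} (hs : 0 < s.re) :
    Tendsto (fun ρ : ℝ => ((ρ : ℂ) ^ s)⁻¹) atTop (𝓝 0) := by
  refine tendsto_inv₀_cobounded.comp (tendsto_norm_atTop_iff_cobounded.mp ?_)
  refine (tendsto_rpow_atTop hs).congr' ?_
  filter_upwards [eventually_gt_atTop 0] with ρ hρ
  simp [norm_cpow_eq_rpow_re_of_pos hρ]

lemma tendsto_add_ofReal_mul_cpow_div_cpow {z : ℂ} (hz : z ∈ slitPlane) (a s : ℂ) :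
    Tendsto (fun ρ : ℝ => (a + ρ * z) ^ s / (ρ : ℂ) ^ s) atTop (𝓝 (z ^ s)) := by
  have hinv : Tendsto (fun ρ : ℝ => ((ρ : ℂ))⁻¹) atTop (𝓝 0) := by
    simpa [Function.comp_def] using (continuous_ofReal.tendsto 0).comp tendsto_inv_atTop_zero
  have hbase : Tendsto (fun ρ : ℝ => a * (ρ : ℂ)⁻¹ + z) atTop (𝓝 z) := by
    simpa using (hinv.const_mul a).add_const z
  refine ((continuousAt_cpow_const hz).tendsto.comp hbase).congr' ?_
  filter_upwards [eventually_gt_atTop 0] with ρ hρ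
  have hρ' : (ρ : ℂ) ≠ 0 := ofReal_ne_zero.mpr hρ.ne'
  have hρs : (ρ : ℂ) ^ s ≠ 0 := cpow_ne_zero_iff.mpr (Or.inl hρ')
  rw [Function.comp_apply, eq_div_iff hρs, mul_comm, ← ofReal_mul_cpow_s3 hρ.le]
  congr 1
  field_simp

lemma exp_I_mul_cpow {θ : ℝ} (hθ : θ ∈ Ioc (-π) π) (s : ℂ) :
    exp (I * θ) ^ s = exp (I * s * θ) := by
  rw [cpow_def_of_ne_zero (exp_ne_zero _), log_exp]
  · ring_nf
  · simpa using hθ.1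
  · simpa using hθ.2

lemma exp_I_mul_mem_slitPlane {θ : ℝ} (hθ : θ ∈ Ioo (-π) π) : exp (I * θ) ∈ slitPlane := by
  have hθ' : θ ∈ Ioc (-π) (-π + 2 * π) := ⟨hθ.1, by linarith [hθ.2]⟩
  rw [exp_mem_slitPlane, show (I * θ).im = θ by simp, (toIocMod_eq_self _).mpr hθ']
  exact hθ.2.ne

lemma I_mul_exp_I_mul (φ : ℝ) : I * exp (I * φ) = exp (I * ↑(φ + π / 2)) := by
  rw [ofReal_add, mul_add, exp_add, mul_comm, ofReal_div, ofReal_ofNat, mul_comm I (π / 2 : ℂ),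
    exp_pi_div_two_mul_I]

lemma neg_I_mul_exp_I_mul (φ : ℝ) : -I * exp (I * φ) = exp (I * ↑(φ - π / 2)) := by
  rw [ofReal_sub, mul_sub, exp_sub, ofReal_div, ofReal_ofNat, mul_comm I (π / 2 : ℂ),
    exp_pi_div_two_mul_I, div_I]
  ring

lemma neg_I_mul_exp_cpow_add_I_mul_exp_cpow {φ : ℝ} (hφ : φ ∈ Ioo (-(π / 2)) (π / 2)) (s : ℂ) :
    (-I * exp (I * φ)) ^ s + (I * exp (I * φ)) ^ s = 2 * cos (s * π / 2) * exp (I * s * φ) := by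
  rw [neg_I_mul_exp_I_mul, I_mul_exp_I_mul,
    exp_I_mul_cpow ⟨by linarith [hφ.1], by linarith [hφ.2, pi_pos]⟩,
    exp_I_mul_cpow ⟨by linarith [hφ.1, pi_pos], by linarith [hφ.2]⟩, two_cos,
    show I * s * ↑(φ - π / 2) = I * s * φ + -(s * π / 2) * I by push_cast; ring,
    show I * s * ↑(φ + π / 2) = I * s * φ + s * π / 2 * I by push_cast; ring, exp_add, exp_add]
  ring

end Complex

namespace Real

lemma Gamma_neg_ne_zero {ν : ℝ} (hν : ν ∈ Ioo 0 2) (hν1 : ν ≠ 1) : Gamma (-ν) ≠ 0 := by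
  refine Gamma_ne_zero fun m hm => ?_
  rcases m with _ | _ | m <;> push_cast at hm
  · linarith [hν.1]
  · exact hν1 (by linarith)
  · linarith [hν.2]

lemma cos_mul_pi_div_two_ne_zero {ν : ℝ} (hν : ν ∈ Ioo 0 2) (hν1 : ν ≠ 1) :
    cos (ν * π / 2) ≠ 0 := by
  rcases hν1.lt_or_gt with h | h
  · exact (cos_pos_of_mem_Ioo ⟨by nlinarith [hν.1, pi_pos], by nlinarith [pi_pos]⟩).ne'
  · exact (cos_neg_of_pi_div_two_lt_of_lt (by nlinarith [pi_pos]) (by nlinarith [hν.2, pi_pos])).ne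

end Real

theorem stmt_3_general (c ν lm lp : ℝ) (hc : 0 < c) (hν : ν ∈ Set.Ioo (0 : ℝ) 2) (hν1 : ν ≠ 1)
    (ψ : ℂ → ℂ)
    (hψ : ∀ ξ : ℂ, ψ ξ = (c : ℂ) * (Real.Gamma (-ν) : ℂ) *
      (((-lm : ℂ)) ^ (ν : ℂ) - ((-lm : ℂ) - Complex.I * ξ) ^ (ν : ℂ)
        + ((lp : ℂ)) ^ (ν : ℂ) - ((lp : ℂ) + Complex.I * ξ) ^ (ν : ℂ)))
    (φ : ℝ) (hφ : φ ∈ Set.Ioo (-(π / 2)) (π / 2)) :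
    Tendsto (fun ρ : ℝ =>
        ψ ((ρ : ℂ) * Complex.exp (Complex.I * φ)) /
          ((-2 * c * Real.Gamma (-ν) * Real.cos (ν * π / 2) : ℂ)
            * Complex.exp (Complex.I * ν * φ) * (ρ : ℂ) ^ (ν : ℂ)))
      atTop (nhds 1) := by
  set e := exp (I * φ)
  have hslit_m : -I * e ∈ slitPlane := by
    rw [neg_I_mul_exp_I_mul]
    exact exp_I_mul_mem_slitPlane ⟨by linarith [hφ.1], by linarith [hφ.2, pi_pos]⟩
  have hslit_p : I * e ∈ slitPlane := by
    rw [I_mul_exp_I_mul]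
    exact exp_I_mul_mem_slitPlane ⟨by linarith [hφ.1, pi_pos], by linarith [hφ.2]⟩
  have hν_re : 0 < (ν : ℂ).re := by simpa using hν.1
  have hlim : Tendsto (fun ρ : ℝ => ψ (ρ * e) / (ρ : ℂ) ^ (ν : ℂ)) atTop
      (𝓝 ((-2 * c * Real.Gamma (-ν) * Real.cos (ν * π / 2) : ℂ) * exp (I * ν * φ))) := by
    have h := (((tendsto_inv_ofReal_cpow_atTop hν_re).const_mul
      ((-lm : ℂ) ^ (ν : ℂ) + (lp : ℂ) ^ (ν : ℂ))).sub
      ((tendsto_add_ofReal_mul_cpow_div_cpow hslit_m (-lm) ν).add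
        (tendsto_add_ofReal_mul_cpow_div_cpow hslit_p lp ν))).const_mul (c * Real.Gamma (-ν) : ℂ)
    rw [neg_I_mul_exp_cpow_add_I_mul_exp_cpow hφ] at h
    convert h using 2 with ρ
    · rw [hψ, show (-lm : ℂ) - I * (ρ * e) = -lm + ρ * (-I * e) by ring,
        show (lp : ℂ) + I * (ρ * e) = lp + ρ * (I * e) by ring]
      ring
    · push_cast
      ring
  have hKE : (-2 * c * Real.Gamma (-ν) * Real.cos (ν * π / 2) : ℂ) * exp (I * ν * φ) ≠ 0 := by
    refine mul_ne_zero ?_ (exp_ne_zero _)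
    exact_mod_cast mul_ne_zero (mul_ne_zero (by simp [hc.ne']) (Real.Gamma_neg_ne_zero hν hν1))
      (Real.cos_mul_pi_div_two_ne_zero hν hν1)
  rw [← div_self hKE]
  exact (hlim.div_const _).congr fun ρ => by ring

/-- CGMY/KoBoL: for every `φ ∈ (-π/2, π/2)`,
`ψ⁰(ρ e^{iφ}) ~ -2cΓ(-ν)cos(νπ/2) e^{iνφ} ρ^ν` as `ρ → +∞`. -/
theorem stmt_3 (c ν lm lp : ℝ) (hc : 0 < c) (hν : ν ∈ Set.Ioo (0 : ℝ) 2) (hν1 : ν ≠ 1)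
    (hlm : lm < 0) (hlp : 0 < lp)
    (ψ : ℂ → ℂ)
    (hψ : ∀ ξ : ℂ, ψ ξ = (c : ℂ) * (Real.Gamma (-ν) : ℂ) *
      (((-lm : ℂ)) ^ (ν : ℂ) - ((-lm : ℂ) - Complex.I * ξ) ^ (ν : ℂ)
        + ((lp : ℂ)) ^ (ν : ℂ) - ((lp : ℂ) + Complex.I * ξ) ^ (ν : ℂ)))
    (φ : ℝ) (hφ : φ ∈ Set.Ioo (-(π / 2)) (π / 2)) :
    Tendsto (fun ρ : ℝ =>
        ψ ((ρ : ℂ) * Complex.exp (Complex.I * φ)) /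
          ((-2 * c * Real.Gamma (-ν) * Real.cos (ν * π / 2) : ℂ)
            * Complex.exp (Complex.I * ν * φ) * (ρ : ℂ) ^ (ν : ℂ)))
      atTop (nhds 1) :=
  stmt_3_general c ν lm lp hc hν hν1 ψ hψ φ hφ
end

section
/- Let 𝒢 be a nonnegative measure on (0, +∞). Then the function f₊(x) = ∫_{(0,∞)} e^{-tx} 𝒢(dt), x > 0, satisfies ∫₀^∞ min(x², 1) f₊(x) dx < ∞ (i.e., f₊ is a Lévy density on (0, ∞)) if and only if ∫_{(0,∞)} (t + t³)^{-1} 𝒢(dt) < ∞. -/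
open MeasureTheory Real Set

/-!
By Tonelli the left-hand integral equals `∫ g d𝒢` with `g t = ∫₀^∞ min(x², 1) e^{-tx} dx`, so it
suffices that `g t` is comparable to `(t + t³)⁻¹` for `t > 0`. From above, `g t` is at most both
`∫₀^∞ e^{-tx} dx = 1/t` and `∫₀^∞ x² e^{-tx} dx = 2/t³`. From below, the integrand is bounded below
by `e⁻²` on `(1, 1 + 1/t]` when `t ≤ 1`, and by `e⁻²/(4t²)` on `(1/(2t), 1/t]` when `t ≥ 1`.
-/

lemma lintegral_pow_mul_exp_neg_mul_Ioi (n : ℕ) {t : ℝ} (ht : 0 < t) :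
    ∫⁻ x in Ioi (0 : ℝ), ENNReal.ofReal (x ^ n * exp (-(t * x)))
      = ENNReal.ofReal (n.factorial / t ^ (n + 1)) := by
  have hΓ := integral_rpow_mul_exp_neg_mul_Ioi (a := n + 1) (by positivity) ht
  simp only [add_sub_cancel_right, Gamma_nat_eq_factorial] at hΓ
  simp only [← Nat.cast_add_one, rpow_natCast] at hΓ
  -- The Bochner integral is nonzero, hence the integrand is integrable.
  have hint : IntegrableOn (fun x : ℝ => x ^ n * exp (-(t * x))) (Ioi 0) :=
    Integrable.of_integral_ne_zero (by rw [hΓ]; positivity)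
  have hnonneg : 0 ≤ᵐ[volume.restrict (Ioi 0)] fun x : ℝ => x ^ n * exp (-(t * x)) :=
    (ae_restrict_iff' measurableSet_Ioi).2 <| ae_of_all _ fun x hx =>
      mul_nonneg (pow_nonneg (le_of_lt hx) n) (exp_pos _).le
  rw [← ofReal_integral_eq_lintegral_ofReal hint hnonneg, hΓ, one_div, inv_pow, inv_mul_eq_div]

lemma ofReal_mul_sub_le_setLIntegral_of_Ioc_subset {s : Set ℝ} {f : ℝ → ℝ} {a b c : ℝ}
    (hc : 0 ≤ c) (hs : Ioc a b ⊆ s) (hf : ∀ x ∈ Ioc a b, c ≤ f x) :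
    ENNReal.ofReal (c * (b - a)) ≤ ∫⁻ x in s, ENNReal.ofReal (f x) :=
  calc ENNReal.ofReal (c * (b - a)) = ∫⁻ _ in Ioc a b, ENNReal.ofReal c := by
        rw [setLIntegral_const, volume_Ioc, ENNReal.ofReal_mul hc]
    _ ≤ ∫⁻ x in Ioc a b, ENNReal.ofReal (f x) :=
        setLIntegral_mono' measurableSet_Ioc fun x hx => ENNReal.ofReal_le_ofReal (hf x hx)
    _ ≤ ∫⁻ x in s, ENNReal.ofReal (f x) := lintegral_mono_set hs

lemma lintegral_lt_top_iff_of_ae_le_of_ae_le {α : Type*} [MeasurableSpace α] {μ : Measure α}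
    {f g : α → ENNReal} {c C : ENNReal} (hc : c ≠ 0) (hC : C ≠ ⊤)
    (hlow : ∀ᵐ a ∂μ, c * g a ≤ f a) (hup : ∀ᵐ a ∂μ, f a ≤ C * g a) :
    ∫⁻ a, f a ∂μ < ⊤ ↔ ∫⁻ a, g a ∂μ < ⊤ := by
  constructor
  · intro hf
    have hcg : c * ∫⁻ a, g a ∂μ < ⊤ :=
      ((lintegral_const_mul_le c g).trans (lintegral_mono_ae hlow)).trans_lt hf
    exact ENNReal.lt_top_of_mul_ne_top_right hcg.ne hc
  · intro hg
    calc ∫⁻ a, f a ∂μ ≤ ∫⁻ a, C * g a ∂μ := lintegral_mono_ae hup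
      _ = C * ∫⁻ a, g a ∂μ := lintegral_const_mul' C g hC
      _ < ⊤ := ENNReal.mul_lt_top hC.lt_top hg

noncomputable def truncSqLaplace (t : ℝ) : ENNReal :=
  ∫⁻ x in Ioi (0 : ℝ), ENNReal.ofReal (min (x ^ 2) 1 * exp (-(t * x)))

lemma truncSqLaplace_le {t : ℝ} (ht : 0 < t) :
    truncSqLaplace t ≤ 4 * ENNReal.ofReal (t + t ^ 3)⁻¹ := by
  rw [← ENNReal.ofReal_ofNat, ← ENNReal.ofReal_mul (by norm_num)]
  have hsum : 0 < t + t ^ 3 := by positivity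
  rcases le_total t 1 with h1 | h1
  · calc truncSqLaplace t ≤ ∫⁻ x in Ioi (0 : ℝ), ENNReal.ofReal (x ^ 0 * exp (-(t * x))) :=
          lintegral_mono fun x => ENNReal.ofReal_le_ofReal <| by
            rw [pow_zero]
            exact mul_le_mul_of_nonneg_right (min_le_right _ _) (exp_pos _).le
      _ = ENNReal.ofReal (1 / t) := by
          rw [lintegral_pow_mul_exp_neg_mul_Ioi 0 ht]; norm_num
      _ ≤ ENNReal.ofReal (4 * (t + t ^ 3)⁻¹) := ENNReal.ofReal_le_ofReal <| by
          rw [← div_eq_mul_inv, div_le_div_iff₀ ht hsum]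
          nlinarith [pow_le_one₀ ht.le h1 (n := 2)]
  · calc truncSqLaplace t ≤ ∫⁻ x in Ioi (0 : ℝ), ENNReal.ofReal (x ^ 2 * exp (-(t * x))) :=
          lintegral_mono fun x => ENNReal.ofReal_le_ofReal <|
            mul_le_mul_of_nonneg_right (min_le_left _ _) (exp_pos _).le
      _ = ENNReal.ofReal (2 / t ^ 3) := by
          rw [lintegral_pow_mul_exp_neg_mul_Ioi 2 ht]; norm_num [Nat.factorial]
      _ ≤ ENNReal.ofReal (4 * (t + t ^ 3)⁻¹) := ENNReal.ofReal_le_ofReal <| by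
          rw [← div_eq_mul_inv, div_le_div_iff₀ (by positivity) hsum]
          nlinarith [one_le_pow₀ h1 (n := 2)]

lemma ofReal_mul_le_truncSqLaplace {t : ℝ} (ht : 0 < t) :
    ENNReal.ofReal (exp (-2) / 8) * ENNReal.ofReal (t + t ^ 3)⁻¹ ≤ truncSqLaplace t := by
  rw [← ENNReal.ofReal_mul (by positivity)]
  have hsum : 0 < t + t ^ 3 := by positivity
  rcases le_total t 1 with h1 | h1
  · refine le_trans (ENNReal.ofReal_le_ofReal ?_) <|
      ofReal_mul_sub_le_setLIntegral_of_Ioc_subset (a := 1) (b := 1 + t⁻¹) (c := exp (-2))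
        (exp_pos _).le (fun x hx => lt_trans one_pos hx.1) fun x hx => ?_
    · rw [add_sub_cancel_left]
      have hinv : (t + t ^ 3)⁻¹ ≤ t⁻¹ := inv_anti₀ ht (by nlinarith [pow_pos ht 3])
      exact mul_le_mul (by linarith [exp_pos (-2)]) hinv (by positivity) (exp_pos _).le
    · rw [min_eq_right (one_le_pow₀ hx.1.le), one_mul, exp_le_exp, neg_le_neg_iff]
      calc t * x ≤ t * (1 + t⁻¹) := mul_le_mul_of_nonneg_left hx.2 ht.le
        _ = t + 1 := by field_simp
        _ ≤ 2 := by linarith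
  · refine le_trans (ENNReal.ofReal_le_ofReal ?_) <|
      ofReal_mul_sub_le_setLIntegral_of_Ioc_subset (a := t⁻¹ / 2) (b := t⁻¹)
        (c := (t⁻¹ / 2) ^ 2 * exp (-2)) (by positivity)
        (fun x hx => lt_trans (by positivity) hx.1) fun x hx => ?_
    · have hinv : (t + t ^ 3)⁻¹ ≤ (t ^ 3)⁻¹ := inv_anti₀ (by positivity) (by linarith)
      have hid : (t⁻¹ / 2) ^ 2 * exp (-2) * (t⁻¹ - t⁻¹ / 2) = exp (-2) / 8 * (t ^ 3)⁻¹ := by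
        field_simp; ring
      rw [hid]
      exact mul_le_mul_of_nonneg_left hinv (by positivity)
    · have ht' : t⁻¹ ≤ 1 := inv_le_one_of_one_le₀ h1
      have hx0 : 0 < t⁻¹ / 2 := by positivity
      refine mul_le_mul (le_min ?_ ?_) ?_ (by positivity) (by positivity)
      · exact pow_le_pow_left₀ hx0.le hx.1.le 2
      · nlinarith
      · rw [exp_le_exp, neg_le_neg_iff]
        calc t * x ≤ t * t⁻¹ := mul_le_mul_of_nonneg_left hx.2 ht.le
          _ = 1 := mul_inv_cancel₀ ht.ne'
          _ ≤ 2 := by norm_num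

lemma lintegral_minSq_mul_laplace_eq (μ : Measure ℝ) [SFinite μ] :
    ∫⁻ x in Ioi (0 : ℝ), ENNReal.ofReal (min (x ^ 2) 1) * ∫⁻ t, ENNReal.ofReal (exp (-(t * x))) ∂μ
      = ∫⁻ t, truncSqLaplace t ∂μ := by
  have hmeas : Measurable (Function.uncurry fun x t : ℝ =>
      ENNReal.ofReal (min (x ^ 2) 1 * exp (-(t * x)))) :=
    ENNReal.measurable_ofReal.comp (by fun_prop)
  calc _ = ∫⁻ x in Ioi (0 : ℝ), ∫⁻ t, ENNReal.ofReal (min (x ^ 2) 1 * exp (-(t * x))) ∂μ := by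
        refine lintegral_congr fun x => ?_
        rw [← lintegral_const_mul' _ _ ENNReal.ofReal_ne_top]
        exact lintegral_congr fun t => (ENNReal.ofReal_mul (by positivity)).symm
    _ = ∫⁻ t, truncSqLaplace t ∂μ := lintegral_lintegral_swap hmeas.aemeasurable

/-- The Laplace transform `f₊` of a nonnegative measure `𝒢` on `(0,∞)` is a Lévy
density iff `∫ (t + t³)⁻¹ 𝒢(dt) < ∞`. -/
theorem stmt_4 (𝒢 : Measure ℝ) [SigmaFinite 𝒢] (h0 : 𝒢 (Set.Iic 0) = 0) :
    (∫⁻ x in Set.Ioi (0 : ℝ),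
        ENNReal.ofReal (min (x ^ 2) 1) *
          (∫⁻ t, ENNReal.ofReal (Real.exp (-(t * x))) ∂𝒢) < ⊤)
      ↔ (∫⁻ t, ENNReal.ofReal ((t + t ^ 3)⁻¹) ∂𝒢 < ⊤) := by
  have hpos : ∀ᵐ t ∂𝒢, 0 < t := ae_iff.2 <| measure_mono_null (fun _ => le_of_not_gt) h0
  rw [lintegral_minSq_mul_laplace_eq]
  exact lintegral_lt_top_iff_of_ae_le_of_ae_le (ENNReal.ofReal_pos.2 (by positivity)).ne'
    ENNReal.ofNat_ne_top (hpos.mono fun _ => ofReal_mul_le_truncSqLaplace)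
    (hpos.mono fun _ => truncSqLaplace_le)
end

section
/- Let 𝒢 be a nonnegative measure on (0, +∞) with ∫_{(0,∞)} (t + t³)^{-1} 𝒢(dt) < ∞. Then f₊(x) = ∫_{(0,∞)} e^{-tx} 𝒢(dt) defines a Lévy density of finite variation type, i.e., ∫₀^∞ min(x, 1) f₊(x) dx < ∞, if and only if ∫_{(0,∞)} (t + t²)^{-1} 𝒢(dt) < ∞. -/
/-!
For `x ≥ 0` one has `1 - e^{-x} ≤ min x 1 ≤ 2 (1 - e^{-x})`, and the Laplace transform of
`1 - e^{-x}` is exactly `1/t - 1/(t + 1) = (t + t²)⁻¹`. By Tonelli the left-hand integral equals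
`∫ (∫₀^∞ min(x, 1) e^{-tx} dx) 𝒢(dt)`, whose integrand therefore lies between `(t + t²)⁻¹`
and `2 (t + t²)⁻¹`.
-/

open MeasureTheory Real Set

theorem one_sub_exp_neg_mul_exp_neg_eq (t x : ℝ) :
    (1 - exp (-x)) * exp (-(t * x)) = exp (-t * x) - exp (-(t + 1) * x) := by
  rw [sub_mul, one_mul, ← exp_add]; ring_nf

theorem lintegral_one_sub_exp_neg_mul_exp_neg {t : ℝ} (ht : 0 < t) :
    ∫⁻ x in Ioi (0 : ℝ), ENNReal.ofReal (1 - exp (-x)) * ENNReal.ofReal (exp (-(t * x)))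
      = ENNReal.ofReal ((t + t ^ 2)⁻¹) := by
  have hint₁ := integrableOn_exp_mul_Ioi (a := -t) (by linarith) 0
  have hint₂ := integrableOn_exp_mul_Ioi (a := -(t + 1)) (by linarith) 0
  have hint : IntegrableOn (fun x ↦ (1 - exp (-x)) * exp (-(t * x))) (Ioi 0) := by
    simp only [one_sub_exp_neg_mul_exp_neg_eq]
    exact hint₁.sub hint₂
  have hnonneg : ∀ x ∈ Ioi (0 : ℝ), 0 ≤ 1 - exp (-x) := fun x hx ↦
    sub_nonneg.2 (exp_le_one_iff.2 (neg_nonpos.2 hx.le))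
  have hintegral : ∫ x in Ioi (0 : ℝ), (1 - exp (-x)) * exp (-(t * x)) = (t + t ^ 2)⁻¹ := by
    simp only [one_sub_exp_neg_mul_exp_neg_eq]
    rw [integral_sub hint₁ hint₂, integral_exp_mul_Ioi (by linarith),
      integral_exp_mul_Ioi (by linarith)]
    simp only [mul_zero, exp_zero]
    field_simp
    ring
  rw [setLIntegral_congr_fun measurableSet_Ioi fun x hx ↦
      (ENNReal.ofReal_mul (hnonneg x hx)).symm,
    ← ofReal_integral_eq_lintegral_ofReal hint, hintegral]
  exact (ae_restrict_iff' measurableSet_Ioi).2 (ae_of_all _ fun x hx ↦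
    mul_nonneg (hnonneg x hx) (exp_pos _).le)

theorem one_sub_exp_neg_le_min_one (x : ℝ) : 1 - exp (-x) ≤ min x 1 :=
  le_min (by linarith [add_one_le_exp (-x)]) (by linarith [exp_pos (-x)])

theorem min_one_le_two_mul_one_sub_exp_neg {x : ℝ} (hx : 0 ≤ x) :
    min x 1 ≤ 2 * (1 - exp (-x)) := by
  have hexp : exp (-x) * (1 + x) ≤ 1 := by
    rw [exp_neg, inv_mul_le_iff₀ (exp_pos x)]; linarith [add_one_le_exp x]
  rcases le_total x 1 with h | h
  · rw [min_eq_left h]; nlinarith [exp_pos (-x)]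
  · rw [min_eq_right h]; nlinarith [exp_pos (-x)]

theorem ofReal_inv_le_lintegral_min_one_mul_exp_neg {t : ℝ} (ht : 0 < t) :
    ENNReal.ofReal ((t + t ^ 2)⁻¹) ≤
      ∫⁻ x in Ioi (0 : ℝ), ENNReal.ofReal (min x 1) * ENNReal.ofReal (exp (-(t * x))) := by
  rw [← lintegral_one_sub_exp_neg_mul_exp_neg ht]
  gcongr with x
  exact one_sub_exp_neg_le_min_one x

theorem lintegral_min_one_mul_exp_neg_le {t : ℝ} (ht : 0 < t) :
    ∫⁻ x in Ioi (0 : ℝ), ENNReal.ofReal (min x 1) * ENNReal.ofReal (exp (-(t * x)))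
      ≤ 2 * ENNReal.ofReal ((t + t ^ 2)⁻¹) := by
  rw [← lintegral_one_sub_exp_neg_mul_exp_neg ht,
    ← lintegral_const_mul' _ _ ENNReal.ofNat_ne_top]
  refine setLIntegral_mono' measurableSet_Ioi fun x hx ↦ ?_
  rw [← mul_assoc, ← ENNReal.ofReal_ofNat 2, ← ENNReal.ofReal_mul zero_le_two]
  gcongr
  exact min_one_le_two_mul_one_sub_exp_neg hx.le

theorem setLIntegral_min_one_mul_lintegral_exp_neg_comm (μ : Measure ℝ) [SFinite μ] :
    ∫⁻ x in Ioi (0 : ℝ), ENNReal.ofReal (min x 1) * (∫⁻ t, ENNReal.ofReal (exp (-(t * x))) ∂μ)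
      = ∫⁻ t, (∫⁻ x in Ioi (0 : ℝ),
          ENNReal.ofReal (min x 1) * ENNReal.ofReal (exp (-(t * x)))) ∂μ := by
  simp_rw [← lintegral_const_mul' _ _ ENNReal.ofReal_ne_top]
  exact lintegral_lintegral_swap (by fun_prop)

theorem stmt_5_general (𝒢 : Measure ℝ) [SigmaFinite 𝒢] (h0 : 𝒢 (Set.Iic 0) = 0) :
    (∫⁻ x in Set.Ioi (0 : ℝ),
        ENNReal.ofReal (min x 1) *
          (∫⁻ t, ENNReal.ofReal (Real.exp (-(t * x))) ∂𝒢) < ⊤)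
      ↔ (∫⁻ t, ENNReal.ofReal ((t + t ^ 2)⁻¹) ∂𝒢 < ⊤) := by
  have hpos : ∀ᵐ t ∂𝒢, 0 < t := by
    rw [ae_iff]
    simp only [not_lt]
    exact h0
  rw [setLIntegral_min_one_mul_lintegral_exp_neg_comm]
  constructor
  · refine fun h ↦ lt_of_le_of_lt (lintegral_mono_ae ?_) h
    exact hpos.mono fun _ ht ↦ ofReal_inv_le_lintegral_min_one_mul_exp_neg ht
  · intro h
    calc ∫⁻ t, (∫⁻ x in Ioi (0 : ℝ),
            ENNReal.ofReal (min x 1) * ENNReal.ofReal (exp (-(t * x)))) ∂𝒢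
        ≤ ∫⁻ t, 2 * ENNReal.ofReal ((t + t ^ 2)⁻¹) ∂𝒢 :=
          lintegral_mono_ae (hpos.mono fun _ ht ↦ lintegral_min_one_mul_exp_neg_le ht)
      _ = 2 * ∫⁻ t, ENNReal.ofReal ((t + t ^ 2)⁻¹) ∂𝒢 :=
          lintegral_const_mul' _ _ ENNReal.ofNat_ne_top
      _ < ⊤ := ENNReal.mul_lt_top ENNReal.ofNat_lt_top h

/-- Given `∫ (t + t³)⁻¹ 𝒢(dt) < ∞`, the Laplace transform `f₊` of `𝒢` is a Lévy
density of finite variation type iff `∫ (t + t²)⁻¹ 𝒢(dt) < ∞`. -/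
theorem stmt_5 (𝒢 : Measure ℝ) [SigmaFinite 𝒢] (h0 : 𝒢 (Set.Iic 0) = 0)
    (h3 : ∫⁻ t, ENNReal.ofReal ((t + t ^ 3)⁻¹) ∂𝒢 < ⊤) :
    (∫⁻ x in Set.Ioi (0 : ℝ),
        ENNReal.ofReal (min x 1) *
          (∫⁻ t, ENNReal.ofReal (Real.exp (-(t * x))) ∂𝒢) < ⊤)
      ↔ (∫⁻ t, ENNReal.ofReal ((t + t ^ 2)⁻¹) ∂𝒢 < ⊤) :=
  stmt_5_general 𝒢 h0
end

section
/- Let ν ∈ (0, 2), and let ψ: ℝ → ℂ satisfy ψ(ξ) = c_± |ξ|^ν + O(|ξ|^{ν-δ}) as ξ → ±∞, where δ > 0, c_± = c e^{±iφ} with c > 0 and φ ∈ (-π/2, π/2). Set ν_± = ν/2 ∓ φ/π. Then ψ_norm(ξ) := c^{-1}(1 - iξ)^{-ν₊}(1 + iξ)^{-ν₋} ψ(ξ) = 1 + O(|ξ|^{-δ'}) as ξ → ±∞ for some δ' > 0 (one may take δ' = min(δ,1)). -/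
/-! For `ξ > 0` we have `log (1 ± iξ) = ½ log (1 + ξ²) ± i arctan ξ`, hence
`(1 - iξ)^{-ν₊} (1 + iξ)^{-ν₋} e^{iφ} ξ^ν = exp (-(ν/2) log (1 + ξ⁻²) + i (2φ/π) arctan ξ⁻¹)`,
which is `1 + O(ξ⁻¹)`. The factor itself has modulus `(1 + ξ²)^{-ν/2} ≤ ξ^{-ν}`, so it turns the
`O(ξ^{ν-δ})` error of `ψ` into `O(ξ^{-δ})`. The side `ξ → -∞` is the side `ξ → +∞` for
`ξ ↦ ψ (-ξ)` with `φ` replaced by `-φ`. -/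

open Complex Real Filter Asymptotics Topology

lemma Real.arctan_le_self_of_nonneg {x : ℝ} (hx : 0 ≤ x) : Real.arctan x ≤ x := by
  simpa only [Real.tan_arctan] using le_tan (Real.arctan_nonneg.2 hx) (Real.arctan_lt_pi_div_two x)

lemma isBigO_log_one_add_inv_sq_atTop :
    (fun ξ : ℝ => Real.log (1 + (ξ ^ 2)⁻¹)) =O[atTop] fun ξ => ξ⁻¹ := by
  refine IsBigO.of_bound 1 ?_
  filter_upwards [eventually_ge_atTop (1 : ℝ)] with ξ hξ
  have hinv : (ξ ^ 2)⁻¹ ≤ ξ⁻¹ := by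
    rw [inv_le_inv₀ (by positivity) (by positivity)]
    nlinarith
  rw [one_mul, Real.norm_of_nonneg (Real.log_nonneg (by simp; positivity)),
    Real.norm_of_nonneg (by positivity)]
  linarith [Real.log_le_sub_one_of_pos (x := 1 + (ξ ^ 2)⁻¹) (by positivity)]

lemma isBigO_arctan_inv_atTop : (fun ξ : ℝ => Real.arctan ξ⁻¹) =O[atTop] fun ξ => ξ⁻¹ := by
  refine IsBigO.of_bound 1 ?_
  filter_upwards [eventually_ge_atTop (0 : ℝ)] with ξ hξ
  have hξ' : 0 ≤ ξ⁻¹ := inv_nonneg.2 hξ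
  rw [one_mul, Real.norm_of_nonneg (Real.arctan_nonneg.2 hξ'), Real.norm_of_nonneg hξ']
  exact Real.arctan_le_self_of_nonneg hξ'

lemma isBigO_abs_rpow_neg_atTop {s t : ℝ} (h : t ≤ s) :
    (fun ξ : ℝ => |ξ| ^ (-s)) =O[atTop] fun ξ => |ξ| ^ (-t) := by
  refine IsBigO.of_bound 1 ?_
  filter_upwards [eventually_ge_atTop (1 : ℝ)] with ξ hξ
  rw [one_mul, Real.norm_of_nonneg (by positivity), Real.norm_of_nonneg (by positivity)]
  exact rpow_le_rpow_of_exponent_le (hξ.trans (le_abs_self ξ)) (neg_le_neg h)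

namespace Complex

lemma isBigO_exp_sub_one {α : Type*} {l : Filter α} {g : α → ℂ} (hg : Tendsto g l (𝓝 0)) :
    (fun x => exp (g x) - 1) =O[l] g := by
  refine IsBigO.of_bound 2 ?_
  filter_upwards [hg.eventually (Metric.closedBall_mem_nhds 0 one_pos)] with x hx
  exact norm_exp_sub_one_le (by simpa using hx)

lemma one_add_I_mul_ne_zero (ξ : ℝ) : 1 + I * ξ ≠ 0 := by
  intro h
  simpa using congrArg re h

lemma arg_one_add_I_mul (ξ : ℝ) : arg (1 + I * ξ) = Real.arctan ξ := by
  have hre : 0 < (1 + I * ξ).re := by simp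
  rw [← Real.arctan_tan (neg_pi_div_two_lt_arg_iff.2 (Or.inl hre))
    (arg_lt_pi_div_two_iff.2 (Or.inl hre)), tan_arg]
  simp

lemma log_one_add_I_mul (ξ : ℝ) :
    log (1 + I * ξ) = ↑(Real.log (1 + ξ ^ 2) / 2) + ↑(Real.arctan ξ) * I := by
  apply Complex.ext
  · rw [log_re, norm_def, normSq_apply]
    simp [-ofReal_arctan, ← sq, Real.log_sqrt (by positivity : (0 : ℝ) ≤ 1 + ξ ^ 2)]
  · simp [-ofReal_arctan, log_im, arg_one_add_I_mul]

lemma one_sub_I_mul_cpow_mul_one_add_I_mul_cpow (a b ξ : ℝ) :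
    (1 - I * ξ) ^ (-(a : ℂ)) * (1 + I * ξ) ^ (-(b : ℂ)) =
      exp (↑(-((a + b) / 2 * Real.log (1 + ξ ^ 2))) + I * ↑((a - b) * Real.arctan ξ)) := by
  have h : 1 - I * ξ = 1 + I * ↑(-ξ) := by push_cast; ring
  rw [h, cpow_def_of_ne_zero (one_add_I_mul_ne_zero _),
    cpow_def_of_ne_zero (one_add_I_mul_ne_zero _), ← exp_add, log_one_add_I_mul,
    log_one_add_I_mul, Real.arctan_neg, neg_sq]
  congr 1
  push_cast
  ring

end Complex

/-- `(1 - iξ)^{-ν₊} (1 + iξ)^{-ν₋}` with `ν_± = ν/2 ∓ φ/π`. -/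
noncomputable def normalizingFactor (ν φ ξ : ℝ) : ℂ :=
  (1 - I * ξ) ^ (-(((ν / 2 - φ / π) : ℝ) : ℂ)) * (1 + I * ξ) ^ (-(((ν / 2 + φ / π) : ℝ) : ℂ))

/-- The paper's `ψ_norm`. -/
noncomputable def normalizedSymbol (ν φ c : ℝ) (ψ : ℝ → ℂ) (ξ : ℝ) : ℂ :=
  (c : ℂ)⁻¹ * (1 - I * ξ) ^ (-(((ν / 2 - φ / π) : ℝ) : ℂ))
    * (1 + I * ξ) ^ (-(((ν / 2 + φ / π) : ℝ) : ℂ)) * ψ ξ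

section

variable {ν φ ξ : ℝ}

lemma normalizedSymbol_eq (c : ℝ) (ψ : ℝ → ℂ) :
    normalizedSymbol ν φ c ψ ξ = (c : ℂ)⁻¹ * normalizingFactor ν φ ξ * ψ ξ := by
  rw [normalizedSymbol, normalizingFactor, mul_assoc ((c : ℂ)⁻¹)]

lemma normalizedSymbol_neg (c : ℝ) (ψ : ℝ → ℂ) :
    normalizedSymbol ν (-φ) c (fun ξ => ψ (-ξ)) ξ = normalizedSymbol ν φ c ψ (-ξ) := by
  have h₁ : 1 - I * ξ = 1 + I * ↑(-ξ) := by push_cast; ring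
  have h₂ : 1 + I * ξ = 1 - I * ↑(-ξ) := by push_cast; ring
  simp only [normalizedSymbol, h₁, h₂, neg_div, sub_neg_eq_add, ← sub_eq_add_neg]
  ring

lemma normalizingFactor_eq_exp :
    normalizingFactor ν φ ξ =
      exp (↑(-(ν / 2 * Real.log (1 + ξ ^ 2))) + I * ↑(-(2 * φ / π) * Real.arctan ξ)) := by
  rw [normalizingFactor, one_sub_I_mul_cpow_mul_one_add_I_mul_cpow]
  congr 1
  push_cast
  ring

lemma norm_normalizingFactor_le (hν : 0 ≤ ν) (hξ : 0 < ξ) :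
    ‖normalizingFactor ν φ ξ‖ ≤ ξ ^ (-ν) := by
  rw [normalizingFactor_eq_exp, norm_exp, rpow_def_of_pos hξ]
  simp only [add_re, ofReal_re, mul_re, I_re, I_im, ofReal_im, zero_mul, mul_zero, sub_zero,
    add_zero]
  refine Real.exp_le_exp.2 ?_
  have : 2 * Real.log ξ ≤ Real.log (1 + ξ ^ 2) := by
    rw [← Nat.cast_ofNat, ← Real.log_pow]
    exact Real.log_le_log (by positivity) (by linarith)
  nlinarith

lemma normalizingFactor_mul_exp_mul_cpow (hξ : 0 < ξ) :
    normalizingFactor ν φ ξ * (exp (I * φ) * ((|ξ| : ℝ) : ℂ) ^ (ν : ℂ)) =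
      exp (↑(-(ν / 2 * Real.log (1 + (ξ ^ 2)⁻¹))) + I * ↑(2 * φ / π * Real.arctan ξ⁻¹)) := by
  have hlog : Real.log (1 + ξ ^ 2) = Real.log (1 + (ξ ^ 2)⁻¹) + 2 * Real.log ξ := by
    rw [show 1 + ξ ^ 2 = (1 + (ξ ^ 2)⁻¹) * ξ ^ 2 by field_simp; ring,
      Real.log_mul (by positivity) (by positivity), Real.log_pow]
    push_cast
    ring
  rw [normalizingFactor_eq_exp, abs_of_pos hξ, cpow_def_of_ne_zero (by exact_mod_cast hξ.ne'),
    ← ofReal_log hξ.le, ← Complex.exp_add, ← Complex.exp_add, Real.arctan_inv_of_pos hξ, hlog]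
  congr 1
  have := Real.pi_pos.ne'
  push_cast
  field_simp
  ring

end

lemma isBigO_normalizingFactor_mul_exp_mul_cpow_sub_one (ν φ : ℝ) :
    (fun ξ : ℝ => normalizingFactor ν φ ξ * (exp (I * φ) * ((|ξ| : ℝ) : ℂ) ^ (ν : ℂ)) - 1)
      =O[atTop] fun ξ => ξ⁻¹ := by
  set g : ℝ → ℂ := fun ξ =>
    ↑(-(ν / 2 * Real.log (1 + (ξ ^ 2)⁻¹))) + I * ↑(2 * φ / π * Real.arctan ξ⁻¹)
  have hg : g =O[atTop] fun ξ => ξ⁻¹ :=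
    (isBigO_ofReal_left.2 (isBigO_log_one_add_inv_sq_atTop.const_mul_left _).neg_left).add
      ((isBigO_ofReal_left.2 (isBigO_arctan_inv_atTop.const_mul_left _)).const_mul_left I)
  refine ((isBigO_exp_sub_one (hg.trans_tendsto tendsto_inv_atTop_zero)).trans hg).congr' ?_
    EventuallyEq.rfl
  filter_upwards [eventually_gt_atTop (0 : ℝ)] with ξ hξ
  rw [normalizingFactor_mul_exp_mul_cpow hξ]

theorem isBigO_normalizedSymbol_sub_one_atTop {ν δ c φ : ℝ} (hν : 0 ≤ ν) (hc : c ≠ 0)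
    {ψ : ℝ → ℂ}
    (hψ : (fun ξ : ℝ => ψ ξ - (c : ℂ) * exp (I * φ) * (|ξ| : ℝ) ^ (ν : ℂ))
        =O[atTop] fun ξ : ℝ => |ξ| ^ (ν - δ)) :
    (fun ξ => normalizedSymbol ν φ c ψ ξ - 1) =O[atTop] fun ξ => |ξ| ^ (-min δ 1) := by
  have hw : (normalizingFactor ν φ) =O[atTop] fun ξ => |ξ| ^ (-ν) := by
    refine IsBigO.of_bound 1 ?_
    filter_upwards [eventually_gt_atTop (0 : ℝ)] with ξ hξ
    rw [one_mul, Real.norm_of_nonneg (by positivity), abs_of_pos hξ]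
    exact norm_normalizingFactor_le hν hξ
  have hrem : (fun ξ => (c : ℂ)⁻¹ * normalizingFactor ν φ ξ
      * (ψ ξ - (c : ℂ) * exp (I * φ) * (|ξ| : ℝ) ^ (ν : ℂ))) =O[atTop] fun ξ => |ξ| ^ (-δ) := by
    refine ((hw.const_mul_left _).mul hψ).congr' EventuallyEq.rfl ?_
    filter_upwards [eventually_gt_atTop (0 : ℝ)] with ξ hξ
    rw [← rpow_add (abs_pos.2 hξ.ne')]
    ring_nf
  have hinv : (fun ξ : ℝ => ξ⁻¹) =ᶠ[atTop] fun ξ => |ξ| ^ (-1 : ℝ) := by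
    filter_upwards [eventually_gt_atTop (0 : ℝ)] with ξ hξ
    rw [rpow_neg_one, abs_of_pos hξ]
  refine ((hrem.trans (isBigO_abs_rpow_neg_atTop (min_le_left _ _))).add
    (((isBigO_normalizingFactor_mul_exp_mul_cpow_sub_one ν φ).trans_eventuallyEq hinv).trans
      (isBigO_abs_rpow_neg_atTop (min_le_right _ _)))).congr' ?_ EventuallyEq.rfl
  filter_upwards with ξ
  rw [normalizedSymbol_eq]
  linear_combination -(normalizingFactor ν φ ξ * (exp (I * φ) * ((|ξ| : ℝ) : ℂ) ^ (ν : ℂ))) *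
    inv_mul_cancel₀ (ofReal_ne_zero.2 hc)

theorem stmt_9_general (ν δ c φ : ℝ) (hν : ν ∈ Set.Ioo (0 : ℝ) 2) (hδ : 0 < δ) (hc : 0 < c)
    (ψ : ℝ → ℂ)
    (hp : (fun ξ : ℝ => ψ ξ - (c : ℂ) * Complex.exp (Complex.I * φ) * (|ξ| : ℝ) ^ (ν : ℂ))
        =O[atTop] fun ξ : ℝ => |ξ| ^ (ν - δ))
    (hmn : (fun ξ : ℝ => ψ ξ - (c : ℂ) * Complex.exp (-(Complex.I * φ)) * (|ξ| : ℝ) ^ (ν : ℂ))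
        =O[atBot] fun ξ : ℝ => |ξ| ^ (ν - δ)) :
    ∃ δ' : ℝ, 0 < δ' ∧
      ((fun ξ : ℝ => (c : ℂ)⁻¹ * (1 - Complex.I * ξ) ^ (-(((ν / 2 - φ / π) : ℝ) : ℂ))
            * (1 + Complex.I * ξ) ^ (-(((ν / 2 + φ / π) : ℝ) : ℂ)) * ψ ξ - 1)
          =O[atTop] fun ξ : ℝ => |ξ| ^ (-δ')) ∧
      ((fun ξ : ℝ => (c : ℂ)⁻¹ * (1 - Complex.I * ξ) ^ (-(((ν / 2 - φ / π) : ℝ) : ℂ))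
            * (1 + Complex.I * ξ) ^ (-(((ν / 2 + φ / π) : ℝ) : ℂ)) * ψ ξ - 1)
          =O[atBot] fun ξ : ℝ => |ξ| ^ (-δ')) := by
  refine ⟨min δ 1, lt_min hδ one_pos,
    isBigO_normalizedSymbol_sub_one_atTop hν.1.le hc.ne' hp, ?_⟩
  have hmn' : (fun ξ : ℝ => ψ (-ξ) - (c : ℂ) * exp (I * ↑(-φ)) * (|ξ| : ℝ) ^ (ν : ℂ))
      =O[atTop] fun ξ : ℝ => |ξ| ^ (ν - δ) := by
    simpa only [Function.comp_def, abs_neg, ofReal_neg, mul_neg] using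
      hmn.comp_tendsto tendsto_neg_atTop_atBot
  have h := (isBigO_normalizedSymbol_sub_one_atTop hν.1.le hc.ne' hmn').comp_tendsto
    tendsto_neg_atBot_atTop
  simp only [Function.comp_def, normalizedSymbol_neg, neg_neg, abs_neg] at h
  exact h

/-- Lemma 4.1(a): if `ψ(ξ) = c e^{±iφ}|ξ|^ν + O(|ξ|^{ν-δ})` as `ξ → ±∞`, then
`ψ_norm(ξ) := c⁻¹(1-iξ)^{-ν₊}(1+iξ)^{-ν₋} ψ(ξ) = 1 + O(|ξ|^{-δ'})` for some `δ' > 0`. -/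
theorem stmt_9 (ν δ c φ : ℝ) (hν : ν ∈ Set.Ioo (0 : ℝ) 2) (hδ : 0 < δ) (hc : 0 < c)
    (hφ : φ ∈ Set.Ioo (-(π / 2)) (π / 2))
    (ψ : ℝ → ℂ)
    (hp : (fun ξ : ℝ => ψ ξ - (c : ℂ) * Complex.exp (Complex.I * φ) * (|ξ| : ℝ) ^ (ν : ℂ))
        =O[atTop] fun ξ : ℝ => |ξ| ^ (ν - δ))
    (hmn : (fun ξ : ℝ => ψ ξ - (c : ℂ) * Complex.exp (-(Complex.I * φ)) * (|ξ| : ℝ) ^ (ν : ℂ))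
        =O[atBot] fun ξ : ℝ => |ξ| ^ (ν - δ)) :
    ∃ δ' : ℝ, 0 < δ' ∧
      ((fun ξ : ℝ => (c : ℂ)⁻¹ * (1 - Complex.I * ξ) ^ (-(((ν / 2 - φ / π) : ℝ) : ℂ))
            * (1 + Complex.I * ξ) ^ (-(((ν / 2 + φ / π) : ℝ) : ℂ)) * ψ ξ - 1)
          =O[atTop] fun ξ : ℝ => |ξ| ^ (-δ')) ∧
      ((fun ξ : ℝ => (c : ℂ)⁻¹ * (1 - Complex.I * ξ) ^ (-(((ν / 2 - φ / π) : ℝ) : ℂ))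
            * (1 + Complex.I * ξ) ^ (-(((ν / 2 + φ / π) : ℝ) : ℂ)) * ψ ξ - 1)
          =O[atBot] fun ξ : ℝ => |ξ| ^ (-δ')) :=
  stmt_9_general ν δ c φ hν hδ hc ψ hp hmn
end

section
/- For the Meixner characteristic exponent ψ⁰(ξ) = 2δ[ln cosh((aξ - ib)/2) - ln cos(b/2)] with δ, a > 0 and b ∈ (-π, π): ψ⁰ extends analytically to ℂ \ i((-∞, (-π+b)/a] ∪ [(π+b)/a, +∞)), and for each γ ∈ (0, π/2), ψ⁰(ξ) ~ aδξ as ξ → ∞ with |arg ξ| ≤ γ. -/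
/-!
For `Re z > 0` one has `log cosh z = z + log (1 + e^{-2z}) - log 2`, and the right-hand side is
analytic on the whole right half-plane because `1 + e^{-2z}` stays in `Re > 0`; by evenness the
same holds on the left half-plane. Together with `log cosh` itself on the strip `|Im z| < π/2`
these branches agree on overlaps and glue to an analytic continuation of `log cosh` to the plane
cut along `{Re z = 0, |Im z| ≥ π/2}`. The Meixner exponent is this continuation composed with
`ξ ↦ (aξ - ib)/2` (up to constants). In a sector `|arg ξ| ≤ γ < π/2` we have `Re ξ → ∞`, so
`log (1 + e^{-2z}) → 0` and `ψ⁰(ξ) = aδξ + O(1)`.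
-/

open Complex Real Filter
open scoped Topology

namespace Complex

lemma cosh_re (z : ℂ) : (cosh z).re = Real.cosh z.re * Real.cos z.im := by
  conv_lhs => rw [← re_add_im z, cosh_add, cosh_mul_I, sinh_mul_I]
  simp [← ofReal_cosh, ← ofReal_cos, ← ofReal_sin, ← ofReal_sinh]

lemma cosh_mem_slitPlane {z : ℂ} (h : |z.im| < π / 2) : cosh z ∈ slitPlane := by
  rw [mem_slitPlane_iff, cosh_re]
  exact Or.inl (mul_pos (Real.cosh_pos _) (Real.cos_pos_of_mem_Ioo (abs_lt.mp h)))

lemma re_one_add_exp_pos {w : ℂ} (h : w.re < 0) : 0 < (1 + exp w).re := by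
  have hnorm : ‖exp w‖ < 1 := by rwa [norm_exp, Real.exp_lt_one_iff]
  rw [add_re, one_re]
  linarith [neg_abs_le (exp w).re, abs_re_le_norm (exp w)]

lemma one_add_exp_mem_slitPlane {w : ℂ} (h : w.re < 0) : 1 + exp w ∈ slitPlane :=
  mem_slitPlane_iff.mpr (Or.inl (re_one_add_exp_pos h))

noncomputable def logCoshRight (z : ℂ) : ℂ := z + log (1 + exp (-2 * z)) - log 2

lemma exp_logCoshRight {z : ℂ} (hz : 0 < z.re) : exp (logCoshRight z) = cosh z := by
  have hne : 1 + exp (-2 * z) ≠ 0 :=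
    slitPlane_ne_zero (one_add_exp_mem_slitPlane (by simpa using hz))
  rw [logCoshRight, exp_sub, exp_add, exp_log hne, exp_log two_ne_zero, mul_add, mul_one,
    ← exp_add, show z + -2 * z = -z by ring, ← two_cosh, mul_div_cancel_left₀ _ two_ne_zero]

lemma log_cosh_eq_logCoshRight {z : ℂ} (hre : 0 < z.re) (him : |z.im| < π / 2) :
    log (cosh z) = logCoshRight z := by
  have harg : |arg (1 + exp (-2 * z))| < π / 2 :=
    abs_arg_lt_pi_div_two_iff.mpr (Or.inl (re_one_add_exp_pos (by simpa using hre)))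
  have him' : (logCoshRight z).im = z.im + arg (1 + exp (-2 * z)) := by
    simp [logCoshRight, log_im, ofNat_arg]
  rw [← exp_logCoshRight hre, log_exp] <;> grind [abs_lt]

lemma analyticAt_logCoshRight {z : ℂ} (hz : 0 < z.re) : AnalyticAt ℂ logCoshRight z := by
  have hmem := one_add_exp_mem_slitPlane (w := -2 * z) (by simpa using hz)
  unfold logCoshRight
  fun_prop (disch := assumption)

lemma log_cosh_eq_logCoshRight_neg {z : ℂ} (hre : z.re < 0) (him : |z.im| < π / 2) :
    log (cosh z) = logCoshRight (-z) := by
  rw [← log_cosh_eq_logCoshRight (by simpa using hre) (by simpa using him), cosh_neg]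

/-- The analytic continuation of `log cosh` from the strip `|Im z| < π/2` to the plane cut along
`{Re z = 0, |Im z| ≥ π/2}` (its value on the cut itself is irrelevant). -/
noncomputable def logCoshExt (z : ℂ) : ℂ :=
  if 0 < z.re then logCoshRight z else if z.re < 0 then logCoshRight (-z) else log (cosh z)

lemma logCoshExt_eq_log_cosh {z : ℂ} (h : |z.im| < π / 2) : logCoshExt z = log (cosh z) := by
  unfold logCoshExt
  split_ifs with hpos hneg
  · exact (log_cosh_eq_logCoshRight hpos h).symm
  · exact (log_cosh_eq_logCoshRight_neg hneg h).symm
  · rfl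

lemma analyticOnNhd_logCoshExt :
    AnalyticOnNhd ℂ logCoshExt {z | ¬(z.re = 0 ∧ π / 2 ≤ |z.im|)} := by
  intro z hz
  rcases lt_trichotomy z.re 0 with hneg | hzero | hpos
  · have hright : AnalyticAt ℂ (fun w => logCoshRight (-w)) z :=
      (analyticAt_logCoshRight (by simpa using hneg)).comp analyticAt_id.neg
    refine hright.congr ?_
    filter_upwards [(isOpen_lt continuous_re continuous_const).mem_nhds hneg] with w hw
    simp [logCoshExt, hw, hw.not_gt]
  · have hstrip : |z.im| < π / 2 := by simpa [hzero] using hz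
    have hlog : AnalyticAt ℂ (fun w => log (cosh w)) z :=
      analyticAt_cosh.clog (cosh_mem_slitPlane hstrip)
    refine hlog.congr ?_
    filter_upwards [(isOpen_lt (continuous_abs.comp continuous_im) continuous_const).mem_nhds
      hstrip] with w hw
    exact (logCoshExt_eq_log_cosh hw).symm
  · refine (analyticAt_logCoshRight hpos).congr ?_
    filter_upwards [(isOpen_lt continuous_const continuous_re).mem_nhds hpos] with w hw
    simp [logCoshExt, hw]

lemma tendsto_logCoshExt_sub_self {α : Type*} {l : Filter α} {z : α → ℂ}
    (hz : Tendsto (fun x => (z x).re) l atTop) :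
    Tendsto (fun x => logCoshExt (z x) - z x) l (𝓝 (-log 2)) := by
  have hexp : Tendsto (fun x => exp (-2 * z x)) l (𝓝 0) := by
    rw [tendsto_zero_iff_norm_tendsto_zero]
    simpa [norm_exp] using hz.const_mul_atTop two_pos
  have hsum : Tendsto (fun x => 1 + exp (-2 * z x)) l (𝓝 1) := by
    simpa using tendsto_const_nhds.add hexp
  have hlog := (continuousAt_clog one_mem_slitPlane).tendsto.comp hsum
  rw [log_one] at hlog
  have hlim := hlog.sub_const (log 2)
  rw [zero_sub] at hlim
  refine hlim.congr' ?_
  filter_upwards [hz.eventually_gt_atTop 0] with x hx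
  simp only [Function.comp_apply, logCoshExt, if_pos hx, logCoshRight]
  ring

lemma tendsto_re_atTop_of_abs_arg_le {γ : ℝ} (hγ₀ : 0 ≤ γ) (hγ : γ < π / 2) :
    Tendsto re (comap (‖·‖) atTop ⊓ 𝓟 {ξ : ℂ | |arg ξ| ≤ γ}) atTop := by
  have hcos : 0 < Real.cos γ := Real.cos_pos_of_mem_Ioo ⟨by linarith, hγ⟩
  have hnorm : Tendsto (‖·‖) (comap (‖·‖) atTop ⊓ 𝓟 {ξ : ℂ | |arg ξ| ≤ γ}) atTop :=
    tendsto_comap.mono_left inf_le_left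
  refine tendsto_atTop_mono' _ ?_ (hnorm.atTop_mul_const hcos)
  filter_upwards [mem_inf_of_right (mem_principal_self _)] with ξ hξ
  rw [← norm_mul_cos_arg ξ, ← Real.cos_abs (arg ξ)]
  exact mul_le_mul_of_nonneg_left
    (Real.cos_le_cos_of_nonneg_of_le_pi (abs_nonneg _) (by linarith [Real.pi_pos]) hξ)
    (norm_nonneg ξ)

lemma re_half_affine (a b : ℝ) (ξ : ℂ) : ((a * ξ - I * b) / 2).re = a / 2 * ξ.re := by
  simp [mul_div_right_comm]

lemma im_half_affine (a b : ℝ) (ξ : ℂ) : ((a * ξ - I * b) / 2).im = (a * ξ.im - b) / 2 := by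
  simp

lemma mapsTo_half_affine {a b : ℝ} (ha : 0 < a) :
    Set.MapsTo (fun ξ : ℂ => (a * ξ - I * b) / 2)
      {ξ : ℂ | ¬(ξ.re = 0 ∧ (ξ.im ≤ (-π + b) / a ∨ (π + b) / a ≤ ξ.im))}
      {z | ¬(z.re = 0 ∧ π / 2 ≤ |z.im|)} := by
  rintro ξ hξ ⟨hre, him⟩
  rw [re_half_affine, mul_eq_zero] at hre
  refine hξ ⟨hre.resolve_left (by positivity), ?_⟩
  rw [im_half_affine, abs_div, abs_two, le_div_iff₀ two_pos, le_abs'] at him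
  rw [div_le_iff₀ ha, le_div_iff₀ ha]
  rcases him with h | h
  · left; linarith
  · right; linarith

end Complex

lemma tendsto_div_mul_nhds_one_of_tendsto_sub {𝕜 : Type*} [NormedField 𝕜] {l : Filter 𝕜}
    {f : 𝕜 → 𝕜} {k c : 𝕜} (hk : k ≠ 0) (hl : l ≤ Bornology.cobounded 𝕜)
    (hf : Tendsto (fun ξ => f ξ - k * ξ) l (𝓝 c)) :
    Tendsto (fun ξ => f ξ / (k * ξ)) l (𝓝 1) := by
  have hsmall : Tendsto (fun ξ => (f ξ - k * ξ) * k⁻¹ * ξ⁻¹) l (𝓝 0) := by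
    simpa using (hf.mul_const k⁻¹).mul (tendsto_inv₀_cobounded.mono_left hl)
  have hone := hsmall.const_add 1
  rw [add_zero] at hone
  refine hone.congr' ?_
  filter_upwards [hl (Bornology.eventually_ne_cobounded 0)] with ξ hξ
  field_simp
  ring

/-- Meixner: `ψ⁰(ξ) = 2δ[ln cosh((aξ-ib)/2) - ln cos(b/2)]` extends analytically to
`ℂ \ i((-∞,(-π+b)/a] ∪ [(π+b)/a,∞))`, and `ψ⁰(ξ) ~ aδξ` as `ξ → ∞` in each cone
`{|arg ξ| ≤ γ}`, `γ ∈ (0, π/2)`. -/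
theorem stmt_14 (δ a b : ℝ) (hδ : 0 < δ) (ha : 0 < a) (hb : b ∈ Set.Ioo (-π) π) :
    ∃ F : ℂ → ℂ,
      AnalyticOn ℂ F
        {ξ : ℂ | ¬(ξ.re = 0 ∧ (ξ.im ≤ (-π + b) / a ∨ (π + b) / a ≤ ξ.im))} ∧
      (∀ ξ : ℝ, F (ξ : ℂ) =
        2 * δ * (Complex.log (Complex.cosh ((a * ξ - Complex.I * b) / 2))
          - Complex.log ((Real.cos (b / 2) : ℂ)))) ∧
      (∀ γ ∈ Set.Ioo (0 : ℝ) (π / 2),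
        Tendsto (fun ξ : ℂ => F ξ / ((a : ℂ) * (δ : ℂ) * ξ))
          (Filter.comap (fun z : ℂ => ‖z‖) atTop ⊓ Filter.principal {ξ : ℂ | |Complex.arg ξ| ≤ γ})
          (nhds 1)) := by
  obtain ⟨hb₁, hb₂⟩ := hb
  set w : ℂ → ℂ := fun ξ => (a * ξ - I * b) / 2 with hw
  refine ⟨fun ξ => 2 * δ * (logCoshExt (w ξ) - log (Real.cos (b / 2) : ℂ)), ?_, fun ξ => ?_, ?_⟩
  · exact (analyticOnNhd_const.mul ((analyticOnNhd_logCoshExt.comp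
      (fun ξ _ => by fun_prop) (mapsTo_half_affine ha)).sub analyticOnNhd_const)).analyticOn
  · have him : |(w ξ).im| < π / 2 := by
      rw [hw, im_half_affine, ofReal_im, mul_zero, zero_sub, abs_div, abs_neg, abs_two]
      linarith [abs_lt.mpr ⟨hb₁, hb₂⟩]
    show 2 * δ * (logCoshExt (w ξ) - _) = _
    rw [logCoshExt_eq_log_cosh him]
  · rintro γ ⟨hγ₀, hγ⟩
    have hre : Tendsto (fun ξ => (w ξ).re)
        (comap (‖·‖) atTop ⊓ 𝓟 {ξ : ℂ | |arg ξ| ≤ γ}) atTop := by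
      simpa only [hw, re_half_affine] using
        (tendsto_re_atTop_of_abs_arg_le hγ₀.le hγ).const_mul_atTop (half_pos ha)
    -- `2δ · w ξ = aδξ - iδb`, so `F ξ - aδξ` is `2δ (logCoshExt (w ξ) - w ξ)` up to a constant
    have hrest := ((tendsto_logCoshExt_sub_self hre).const_mul (2 * (δ : ℂ))).sub_const
      (I * δ * b + 2 * δ * log (Real.cos (b / 2) : ℂ))
    refine tendsto_div_mul_nhds_one_of_tendsto_sub (by exact_mod_cast (mul_pos ha hδ).ne')
      (inf_le_left.trans comap_norm_atTop.le) (hrest.congr fun ξ => ?_)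
    rw [hw]
    ring
end

section
/- Let α ∈ (0,1). The measure 𝒢(dt) = c·t^α dt on (0,∞) (c > 0) satisfies ∫ (t + t²)^{-1} 𝒢(dt) < ∞ (so 𝒢/t is a Stieltjes measure) but 𝒢(dt)/(t²) does not satisfy the Stieltjes condition ∫ (1+t)^{-1} t^{α-2} dt < ∞ fails at 0; for α ∈ (1,2), 𝒢(dt)/t² is a Stieltjes measure but 𝒢(dt)/t is not; for α = 1, neither 𝒢/t nor 𝒢/t² alone is a Stieltjes measure, but 𝒢(dt) = (t² + t)𝒢⁰(dt) for the Stieltjes measure 𝒢⁰(dt) = c·(t + t²)^{-1}·t dt = c·(1+t)^{-1} dt. -/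
/-!
A power density `t ^ s` has finite Stieltjes integral `∫ (1 + t)⁻¹ t ^ s dt` over `(0, ∞)` exactly
when `-1 < s < 0`: the weight `(1 + t)⁻¹` is comparable to `1` on `(0, 1]` and to `t⁻¹` on `(1, ∞)`.
The densities `𝒢(dt)/t` and `𝒢(dt)/t²` of `𝒢(dt) = c t^α dt` are the powers `s = α - 1` and
`s = α - 2`, and the density `c (1 + t)⁻¹` of the case `α = 1` is comparable to `1` near `0` and
to `t⁻²` near `∞`.
-/

open Real MeasureTheory Set

section Comparison

variable {X : Type*} [MeasurableSpace X] {μ : Measure X}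

lemma setLIntegral_ofReal_lt_top_iff_of_bounds {f g : X → ℝ} {S : Set X} (hS : MeasurableSet S)
    {m M : ℝ} (hm : 0 < m) (hM : 0 ≤ M) (hlower : ∀ x ∈ S, m * g x ≤ f x)
    (hupper : ∀ x ∈ S, f x ≤ M * g x) :
    ∫⁻ x in S, ENNReal.ofReal (f x) ∂μ < ⊤ ↔ ∫⁻ x in S, ENNReal.ofReal (g x) ∂μ < ⊤ := by
  constructor
  · intro hf
    have hmul : ENNReal.ofReal m * ∫⁻ x in S, ENNReal.ofReal (g x) ∂μ ≤
        ∫⁻ x in S, ENNReal.ofReal (f x) ∂μ := by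
      rw [← lintegral_const_mul' _ _ ENNReal.ofReal_ne_top]
      refine setLIntegral_mono' hS fun x hx => ?_
      rw [← ENNReal.ofReal_mul hm.le]
      exact ENNReal.ofReal_le_ofReal (hlower x hx)
    exact ENNReal.lt_top_of_mul_ne_top_right (hmul.trans_lt hf).ne
      (ENNReal.ofReal_pos.2 hm).ne'
  · intro hg
    calc ∫⁻ x in S, ENNReal.ofReal (f x) ∂μ
        ≤ ∫⁻ x in S, ENNReal.ofReal M * ENNReal.ofReal (g x) ∂μ :=
          setLIntegral_mono' hS fun x hx => by
            rw [← ENNReal.ofReal_mul hM]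
            exact ENNReal.ofReal_le_ofReal (hupper x hx)
      _ = ENNReal.ofReal M * ∫⁻ x in S, ENNReal.ofReal (g x) ∂μ :=
          lintegral_const_mul' _ _ ENNReal.ofReal_ne_top
      _ < ⊤ := ENNReal.mul_lt_top ENNReal.ofReal_lt_top hg

end Comparison

lemma setLIntegral_Ioc_rpow_lt_top_iff {x : ℝ} (hx : 0 < x) (s : ℝ) :
    ∫⁻ t in Ioc 0 x, ENNReal.ofReal (t ^ s) < ⊤ ↔ -1 < s := by
  rw [← intervalIntegral.integrableOn_Ioo_rpow_iff hx, ← integrableOn_Ioc_iff_integrableOn_Ioo,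
    lt_top_iff_ne_top, lintegral_ofReal_ne_top_iff_integrable (by fun_prop)]
  · rfl
  · filter_upwards [ae_restrict_mem measurableSet_Ioc] with t ht using rpow_nonneg ht.1.le s

lemma setLIntegral_Ioi_rpow_lt_top_iff {x : ℝ} (hx : 0 < x) (s : ℝ) :
    ∫⁻ t in Ioi x, ENNReal.ofReal (t ^ s) < ⊤ ↔ s < -1 := by
  rw [← integrableOn_Ioi_rpow_iff hx, lt_top_iff_ne_top,
    lintegral_ofReal_ne_top_iff_integrable (by fun_prop)]
  · rfl
  · filter_upwards [ae_restrict_mem measurableSet_Ioi] with t ht using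
      rpow_nonneg (hx.trans ht).le s

lemma setLIntegral_Ioi_zero_lt_top_iff_of_rpow_bounds {f : ℝ → ℝ} {a b m M : ℝ} (hm : 0 < m)
    (hM : 0 ≤ M) (h₀ : ∀ t ∈ Ioc (0 : ℝ) 1, m * t ^ a ≤ f t ∧ f t ≤ M * t ^ a)
    (h₁ : ∀ t ∈ Ioi (1 : ℝ), m * t ^ b ≤ f t ∧ f t ≤ M * t ^ b) :
    ∫⁻ t in Ioi 0, ENNReal.ofReal (f t) < ⊤ ↔ -1 < a ∧ b < -1 := by
  rw [← Ioc_union_Ioi_eq_Ioi zero_le_one, lintegral_union measurableSet_Ioi Ioc_disjoint_Ioi_same,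
    ENNReal.add_lt_top,
    setLIntegral_ofReal_lt_top_iff_of_bounds measurableSet_Ioc hm hM
      (fun t ht => (h₀ t ht).1) (fun t ht => (h₀ t ht).2),
    setLIntegral_ofReal_lt_top_iff_of_bounds measurableSet_Ioi hm hM
      (fun t ht => (h₁ t ht).1) (fun t ht => (h₁ t ht).2),
    setLIntegral_Ioc_rpow_lt_top_iff zero_lt_one, setLIntegral_Ioi_rpow_lt_top_iff zero_lt_one]

lemma one_add_inv_mem_Icc_of_mem_Ioc {t : ℝ} (ht : t ∈ Ioc 0 1) : (1 + t)⁻¹ ∈ Icc 2⁻¹ 1 :=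
  ⟨inv_anti₀ (by linarith [ht.1]) (by linarith [ht.2]), inv_le_one_of_one_le₀ (by linarith [ht.1])⟩

lemma one_add_inv_mem_Icc_of_one_lt {t : ℝ} (ht : 1 < t) : (1 + t)⁻¹ ∈ Icc (2⁻¹ * t⁻¹) t⁻¹ := by
  rw [← mul_inv]
  exact ⟨inv_anti₀ (by linarith) (by linarith), inv_anti₀ (by linarith) (by linarith)⟩

lemma setLIntegral_one_add_inv_mul_rpow_lt_top_iff {c : ℝ} (hc : 0 < c) (s : ℝ) :
    ∫⁻ t in Ioi 0, ENNReal.ofReal ((1 + t)⁻¹ * (c * t ^ s)) < ⊤ ↔ -1 < s ∧ s < 0 := by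
  rw [setLIntegral_Ioi_zero_lt_top_iff_of_rpow_bounds (a := s) (b := s - 1) (half_pos hc) hc.le]
  · constructor <;> rintro ⟨h₀, h₁⟩ <;> constructor <;> linarith
  · intro t ht
    have hu := one_add_inv_mem_Icc_of_mem_Ioc ht
    have hp : 0 ≤ c * t ^ s := by have := ht.1; positivity
    rw [show c / 2 * t ^ s = 2⁻¹ * (c * t ^ s) by ring]
    exact ⟨mul_le_mul_of_nonneg_right hu.1 hp, mul_le_of_le_one_left hp hu.2⟩
  · intro t (ht : 1 < t)
    have hu := one_add_inv_mem_Icc_of_one_lt ht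
    have hp : 0 ≤ c * t ^ s := by have := zero_lt_one.trans ht; positivity
    rw [rpow_sub_one (zero_lt_one.trans ht).ne', show c / 2 * (t ^ s / t) = 2⁻¹ * t⁻¹ * (c * t ^ s)
      by ring, show c * (t ^ s / t) = t⁻¹ * (c * t ^ s) by ring]
    exact ⟨mul_le_mul_of_nonneg_right hu.1 hp, mul_le_mul_of_nonneg_right hu.2 hp⟩

lemma setLIntegral_one_add_inv_mul_const_mul_one_add_inv_lt_top {c : ℝ} (hc : 0 < c) :
    ∫⁻ t in Ioi 0, ENNReal.ofReal ((1 + t)⁻¹ * (c * (1 + t)⁻¹)) < ⊤ := by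
  refine (setLIntegral_Ioi_zero_lt_top_iff_of_rpow_bounds (a := 0) (b := -2) (m := c / 4)
    (by positivity) hc.le ?_ ?_).2 (by norm_num)
  · intro t ht
    have hu := one_add_inv_mem_Icc_of_mem_Ioc ht
    have ht0 : 0 < t := ht.1
    rw [rpow_zero, show c / 4 * 1 = 2⁻¹ * (c * 2⁻¹) by ring, show c * 1 = 1 * (c * 1) by ring]
    exact ⟨mul_le_mul hu.1 (mul_le_mul_of_nonneg_left hu.1 hc.le) (by positivity) (by positivity),
      mul_le_mul hu.2 (mul_le_mul_of_nonneg_left hu.2 hc.le) (by positivity) zero_le_one⟩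
  · intro t (ht : 1 < t)
    have hu := one_add_inv_mem_Icc_of_one_lt ht
    rw [rpow_neg (zero_lt_one.trans ht).le, rpow_two,
      show c / 4 * (t ^ 2)⁻¹ = 2⁻¹ * t⁻¹ * (c * (2⁻¹ * t⁻¹)) by ring,
      show c * (t ^ 2)⁻¹ = t⁻¹ * (c * t⁻¹) by ring]
    exact ⟨mul_le_mul hu.1 (mul_le_mul_of_nonneg_left hu.1 hc.le) (by positivity) (by positivity),
      mul_le_mul hu.2 (mul_le_mul_of_nonneg_left hu.2 hc.le) (by positivity) (by positivity)⟩

/-- Proposition 3.11: classification of the stable measure `𝒢(dt) = c t^α dt`.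
For `α ∈ (0,1)`, `𝒢/t` is a Stieltjes measure but `𝒢/t²` is not; for `α ∈ (1,2)`,
`𝒢/t²` is a Stieltjes measure but `𝒢/t` is not; for `α = 1`, neither is, yet
`𝒢(dt) = (t² + t)𝒢⁰(dt)` with the Stieltjes measure `𝒢⁰(dt) = c(1+t)⁻¹ dt`. -/
theorem stmt_16 (α c : ℝ) (hα : α ∈ Set.Ioo (0 : ℝ) 2) (hc : 0 < c) :
    (α < 1 →
      (∫⁻ t in Set.Ioi (0 : ℝ), ENNReal.ofReal ((1 + t)⁻¹ * (c * t ^ α / t)) < ⊤) ∧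
      ¬(∫⁻ t in Set.Ioi (0 : ℝ), ENNReal.ofReal ((1 + t)⁻¹ * (c * t ^ α / t ^ 2)) < ⊤)) ∧
    (1 < α →
      (∫⁻ t in Set.Ioi (0 : ℝ), ENNReal.ofReal ((1 + t)⁻¹ * (c * t ^ α / t ^ 2)) < ⊤) ∧
      ¬(∫⁻ t in Set.Ioi (0 : ℝ), ENNReal.ofReal ((1 + t)⁻¹ * (c * t ^ α / t)) < ⊤)) ∧
    (α = 1 →
      ¬(∫⁻ t in Set.Ioi (0 : ℝ), ENNReal.ofReal ((1 + t)⁻¹ * (c * t ^ α / t)) < ⊤) ∧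
      ¬(∫⁻ t in Set.Ioi (0 : ℝ), ENNReal.ofReal ((1 + t)⁻¹ * (c * t ^ α / t ^ 2)) < ⊤) ∧
      (∫⁻ t in Set.Ioi (0 : ℝ), ENNReal.ofReal ((1 + t)⁻¹ * (c * (1 + t)⁻¹)) < ⊤) ∧
      (∀ t ∈ Set.Ioi (0 : ℝ), c * t ^ α = (t ^ 2 + t) * (c * (1 + t)⁻¹))) := by
  obtain ⟨hα0, hα2⟩ := hα
  have div_t : ∫⁻ t in Ioi 0, ENNReal.ofReal ((1 + t)⁻¹ * (c * t ^ α / t)) < ⊤ ↔ α < 1 := by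
    rw [setLIntegral_congr_fun measurableSet_Ioi fun t (ht : 0 < t) => by
      rw [mul_div_assoc, ← rpow_sub_one ht.ne'], setLIntegral_one_add_inv_mul_rpow_lt_top_iff hc]
    exact ⟨fun h => by linarith [h.2], fun h => ⟨by linarith, by linarith⟩⟩
  have div_t_sq : ∫⁻ t in Ioi 0, ENNReal.ofReal ((1 + t)⁻¹ * (c * t ^ α / t ^ 2)) < ⊤ ↔
      1 < α := by
    rw [setLIntegral_congr_fun measurableSet_Ioi fun t (ht : 0 < t) => by
      rw [mul_div_assoc, ← rpow_sub_natCast ht.ne'], setLIntegral_one_add_inv_mul_rpow_lt_top_iff hc]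
    push_cast
    exact ⟨fun h => by linarith [h.1], fun h => ⟨by linarith, by linarith⟩⟩
  rw [div_t, div_t_sq]
  refine ⟨fun h => ⟨h, h.asymm⟩, fun h => ⟨h, h.asymm⟩, fun h => ⟨h.not_lt, h.symm.not_lt,
    setLIntegral_one_add_inv_mul_const_mul_one_add_inv_lt_top hc, fun t (ht : 0 < t) => ?_⟩⟩
  rw [h, rpow_one]
  field_simp
  ring
end
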